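/- Let I ≠ 0 be a square-free monomial ideal in K[x_1,…,x_n,z_1,…,z_r] and let J = I + (x_i y_j : 1 ≤ i ≤ n, 1 ≤ j ≤ m) in S = K[x_1,…,x_n,y_1,…,y_m,z_1,…,z_r]. Then J^∨ = I^∨ ∩ (x_1⋯x_n, y_1⋯y_m). -/

import Mathlib

/-! A squarefree monomial lies in a sum of squarefree monomial ideals iff it lies in one of
them, so the Alexander dual turns `I + E` into `I^∨ ∩ E^∨`. For the ideal `E = (xᵢ yⱼ)` of the
complete bipartite graph, every monomial of a polynomial lying in all the primes `(xᵢ, yⱼ)`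
involves either all the `xᵢ` or all the `yⱼ`, whence `E^∨ = (x₁⋯xₙ, y₁⋯yₘ)`. -/

open MvPolynomial

noncomputable section

/-- The irrelevant (graded maximal) ideal `(x_i : i)` of a polynomial ring. -/
def irrelevantIdeal (K : Type) [Field K] (σ : Type) : Ideal (MvPolynomial σ K) :=
  Ideal.span (Set.range (X : σ → MvPolynomial σ K))

/-- `depthIdeal m M` is the depth of the module `M` with respect to the ideal `m`:
the supremum of lengths of `M`-regular sequences with entries in `m`. -/
def depthIdeal {R : Type} [CommRing R] (m : Ideal R)
    (M : Type) [AddCommGroup M] [Module R M] : ℕ :=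
  sSup {k | ∃ rs : List R, rs.length = k ∧ (∀ r ∈ rs, r ∈ m) ∧
    RingTheory.Sequence.IsRegular M rs}

/-- `I` is a squarefree monomial ideal: generated by squarefree monomials. -/
def IsSqFreeMonomialIdeal {K : Type} [Field K] {σ : Type}
    (I : Ideal (MvPolynomial σ K)) : Prop :=
  ∃ 𝒮 : Set (Finset σ),
    I = Ideal.span ((fun s : Finset σ => ∏ i ∈ s, (X i : MvPolynomial σ K)) '' 𝒮)

/-- `I` is a squarefree monomial ideal generated in degree `d`. -/
def IsSqFreeMonomialIdealInDegree {K : Type} [Field K] {σ : Type}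
    (I : Ideal (MvPolynomial σ K)) (d : ℕ) : Prop :=
  ∃ 𝒮 : Set (Finset σ), (∀ s ∈ 𝒮, s.card = d) ∧
    I = Ideal.span ((fun s : Finset σ => ∏ i ∈ s, (X i : MvPolynomial σ K)) '' 𝒮)

/-- The Alexander dual of a squarefree monomial ideal: the intersection of the prime
ideals `P_M = (x_i : x_i ∣ M)` over the (squarefree) monomials `M` in `I`. -/
def alexDual {K : Type} [Field K] {σ : Type}
    (I : Ideal (MvPolynomial σ K)) : Ideal (MvPolynomial σ K) :=
  ⨅ (s : Finset σ) (_ : (∏ i ∈ s, (X i : MvPolynomial σ K)) ∈ I),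
    Ideal.span ((fun i : σ => (X i : MvPolynomial σ K)) '' ↑s)

/-- The edge ideal of a simple graph. -/
def edgeIdeal (K : Type) [Field K] {σ : Type} (G : SimpleGraph σ) :
    Ideal (MvPolynomial σ K) :=
  Ideal.span {p | ∃ i j : σ, G.Adj i j ∧ p = X i * X j}

/-- A minimal graded free resolution of a (homogeneous) ideal `I` in a polynomial ring:
an exact sequence `⋯ → F₁ → F₀ → I → 0` of free modules `Fᵢ = ⊕ S(-degᵢ b)`, with
degree-zero (homogeneous) differentials whose matrix entries lie in the irrelevant
maximal ideal (minimality). -/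
structure MinimalGradedFreeResolution {K : Type} [Field K] {σ : Type}
    (I : Ideal (MvPolynomial σ K)) where
  ι : ℕ → Type
  finite : ∀ i, Finite (ι i)
  deg : ∀ i, ι i → ℕ
  d : ∀ i, (ι (i + 1) →₀ MvPolynomial σ K) →ₗ[MvPolynomial σ K]
      (ι i →₀ MvPolynomial σ K)
  ε : (ι 0 →₀ MvPolynomial σ K) →ₗ[MvPolynomial σ K] MvPolynomial σ K
  range_ε : LinearMap.range ε = I
  exact_ε : LinearMap.ker ε = LinearMap.range (d 0)
  exact_d : ∀ i, LinearMap.ker (d i) = LinearMap.range (d (i + 1))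
  homog_ε : ∀ b : ι 0, (ε (Finsupp.single b 1)).IsHomogeneous (deg 0 b)
  homog_d : ∀ i, ∀ b : ι (i + 1), ∀ c : ι i,
      (d i (Finsupp.single b 1)) c = 0 ∨
      (deg i c ≤ deg (i + 1) b ∧
        ((d i (Finsupp.single b 1)) c).IsHomogeneous (deg (i + 1) b - deg i c))
  minimal : ∀ i, ∀ b : ι (i + 1), ∀ c : ι i,
      constantCoeff ((d i (Finsupp.single b 1)) c) = 0

namespace MinimalGradedFreeResolution

variable {K : Type} [Field K] {σ : Type} {I : Ideal (MvPolynomial σ K)}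

/-- The graded Betti number `β_{i,j}` read off from a minimal graded free resolution. -/
def betti (R : MinimalGradedFreeResolution I) (i j : ℕ) : ℕ :=
  Nat.card {b : R.ι i // R.deg i b = j}

end MinimalGradedFreeResolution

/-- The graded Betti number `β_{i,j}(I)` (well defined since all minimal graded free
resolutions of `I` have the same Betti numbers). -/
def bettiNumber {K : Type} [Field K] {σ : Type} (I : Ideal (MvPolynomial σ K))
    (i j : ℕ) : ℕ :=
  sSup {b | ∃ R : MinimalGradedFreeResolution I, R.betti i j = b}

/-- Castelnuovo–Mumford regularity: `reg I = sup { j - i : β_{i,j}(I) ≠ 0 }`. -/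
def reg {K : Type} [Field K] {σ : Type} (I : Ideal (MvPolynomial σ K)) : ℕ :=
  sSup {r | ∃ i j : ℕ, bettiNumber I i j ≠ 0 ∧ j = i + r}

/-- The initial degree of a homogeneous ideal: the least degree of a nonzero
homogeneous element. -/
def indeg {K : Type} [Field K] {σ : Type} (I : Ideal (MvPolynomial σ K)) : ℕ :=
  sInf {d | ∃ p ∈ I, p ≠ 0 ∧ MvPolynomial.IsHomogeneous p d}

/-- `I` has a `d`-linear resolution: it admits a minimal graded free resolution all of
whose Betti numbers are concentrated in `β_{i,i+d}`. -/
def HasLinearResolution {K : Type} [Field K] {σ : Type}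
    (I : Ideal (MvPolynomial σ K)) (dd : ℕ) : Prop :=
  ∃ R : MinimalGradedFreeResolution I, ∀ i j : ℕ, R.betti i j ≠ 0 → j = i + dd

end

namespace MvPolynomial

section CommSemiring

variable {R : Type*} [CommSemiring R] {σ : Type*}

theorem prod_X_eq_monomial (s : Finset σ) :
    ∏ i ∈ s, (X i : MvPolynomial σ R) = monomial (∑ i ∈ s, Finsupp.single i 1) 1 := by
  rw [monomial_sum_one]
  rfl

theorem sum_single_one_apply [DecidableEq σ] (s : Finset σ) (a : σ) :
    (∑ i ∈ s, Finsupp.single i 1 : σ →₀ ℕ) a = if a ∈ s then 1 else 0 := by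
  simp [Finsupp.finsetSum_apply, Finsupp.single_apply]

theorem support_sum_single_one (s : Finset σ) :
    (∑ i ∈ s, Finsupp.single i 1 : σ →₀ ℕ).support = s := by
  classical
  ext a
  simp [sum_single_one_apply]

theorem sum_single_one_le_iff (s : Finset σ) (u : σ →₀ ℕ) :
    ∑ i ∈ s, Finsupp.single i 1 ≤ u ↔ s ⊆ u.support := by
  classical
  simp only [Finsupp.le_def, sum_single_one_apply, Finset.subset_iff, Finsupp.mem_support_iff]
  refine ⟨fun h a ha => ?_, fun h a => ?_⟩
  · simpa [ha, Nat.one_le_iff_ne_zero] using h a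
  · split_ifs with ha
    · exact Nat.one_le_iff_ne_zero.2 (h ha)
    · exact Nat.zero_le _

theorem mem_span_prod_X_iff {p : MvPolynomial σ R} {𝒮 : Set (Finset σ)} :
    p ∈ Ideal.span ((fun s => ∏ i ∈ s, X i) '' 𝒮) ↔
      ∀ u ∈ p.support, ∃ s ∈ 𝒮, s ⊆ u.support := by
  have h𝒮 : (fun s : Finset σ => ∏ i ∈ s, (X i : MvPolynomial σ R)) '' 𝒮 =
      (fun v => monomial v 1) '' ((fun s => ∑ i ∈ s, Finsupp.single i 1) '' 𝒮) := by
    simp only [Set.image_image, prod_X_eq_monomial]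
  simp [h𝒮, mem_ideal_span_monomial_image, sum_single_one_le_iff]

theorem prod_X_mem_span_prod_X_iff [Nontrivial R] {t : Finset σ} {𝒮 : Set (Finset σ)} :
    ∏ i ∈ t, (X i : MvPolynomial σ R) ∈ Ideal.span ((fun s => ∏ i ∈ s, X i) '' 𝒮) ↔
      ∃ s ∈ 𝒮, s ⊆ t := by
  classical
  rw [mem_span_prod_X_iff, prod_X_eq_monomial, support_monomial, if_neg one_ne_zero]
  simp [support_sum_single_one]

end CommSemiring

end MvPolynomial

section SqFreeMonomialIdeal

variable {K : Type} [Field K] {σ : Type}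

theorem IsSqFreeMonomialIdeal.prod_X_mem_sup_iff {I E : Ideal (MvPolynomial σ K)}
    (hI : IsSqFreeMonomialIdeal I) (hE : IsSqFreeMonomialIdeal E) (t : Finset σ) :
    ∏ i ∈ t, X i ∈ I ⊔ E ↔ ∏ i ∈ t, X i ∈ I ∨ ∏ i ∈ t, X i ∈ E := by
  obtain ⟨𝒮, rfl⟩ := hI
  obtain ⟨ℰ, rfl⟩ := hE
  simp only [← Ideal.span_union, ← Set.image_union, prod_X_mem_span_prod_X_iff,
    Set.mem_union, or_and_right, exists_or]

theorem alexDual_sup {I E : Ideal (MvPolynomial σ K)}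
    (hI : IsSqFreeMonomialIdeal I) (hE : IsSqFreeMonomialIdeal E) :
    alexDual (I ⊔ E) = alexDual I ⊓ alexDual E := by
  simp only [alexDual, hI.prod_X_mem_sup_iff hE, iInf_or, iInf_inf_eq]

theorem span_X_mul_X_eq_span_prod_X [DecidableEq σ] {A B : Finset σ} (hAB : Disjoint A B) :
    Ideal.span {p : MvPolynomial σ K | ∃ a ∈ A, ∃ b ∈ B, p = X a * X b} =
      Ideal.span ((fun s => ∏ i ∈ s, X i) '' {s | ∃ a ∈ A, ∃ b ∈ B, s = {a, b}}) := by
  have hne {a b : σ} (ha : a ∈ A) (hb : b ∈ B) : a ≠ b :=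
    fun hab => Finset.disjoint_left.1 hAB ha (hab ▸ hb)
  congr 1
  ext p
  constructor
  · rintro ⟨a, ha, b, hb, rfl⟩
    exact ⟨{a, b}, ⟨a, ha, b, hb, rfl⟩, Finset.prod_pair (hne ha hb)⟩
  · rintro ⟨_, ⟨a, ha, b, hb, rfl⟩, rfl⟩
    exact ⟨a, ha, b, hb, Finset.prod_pair (hne ha hb)⟩

theorem prod_X_mem_span_X_mul_X_iff {A B : Finset σ} (hAB : Disjoint A B)
    (t : Finset σ) :
    ∏ i ∈ t, X i ∈ Ideal.span {p : MvPolynomial σ K | ∃ a ∈ A, ∃ b ∈ B, p = X a * X b} ↔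
      ∃ a ∈ A, ∃ b ∈ B, a ∈ t ∧ b ∈ t := by
  classical
  rw [span_X_mul_X_eq_span_prod_X hAB, prod_X_mem_span_prod_X_iff]
  simp [Finset.insert_subset_iff, and_assoc]

theorem alexDual_span_X_mul_X {A B : Finset σ} (hAB : Disjoint A B) :
    alexDual (Ideal.span {p : MvPolynomial σ K | ∃ a ∈ A, ∃ b ∈ B, p = X a * X b}) =
      Ideal.span {∏ a ∈ A, X a, ∏ b ∈ B, X b} := by
  classical
  simp only [alexDual, prod_X_mem_span_X_mul_X_iff hAB]
  apply le_antisymm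
  · intro p hp
    have hedge : ∀ a ∈ A, ∀ b ∈ B, ∀ u ∈ p.support, a ∈ u.support ∨ b ∈ u.support := by
      intro a ha b hb u hu
      have hab : p ∈ Ideal.span (X '' {a, b}) := by
        simpa using (Submodule.mem_iInf _).1 ((Submodule.mem_iInf _).1 hp {a, b})
          ⟨a, ha, b, hb, by simp, by simp⟩
      obtain ⟨i, hi, hui⟩ := mem_ideal_span_X_image.1 hab u hu
      rcases hi with rfl | rfl <;> simp [hui]
    rw [← Set.image_pair (fun s : Finset σ => ∏ i ∈ s, (X i : MvPolynomial σ K)),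
      mem_span_prod_X_iff]
    intro u hu
    by_contra! h
    obtain ⟨a, ha, hau⟩ := Finset.not_subset.1 (h A (by simp))
    obtain ⟨b, hb, hbu⟩ := Finset.not_subset.1 (h B (by simp))
    exact (hedge a ha b hb u hu).elim hau hbu
  · refine le_iInf₂ fun s ⟨a, ha, b, hb, has, hbs⟩ => Ideal.span_le.2 ?_
    rintro _ (rfl | rfl)
    · exact Ideal.mem_of_dvd _ (Finset.dvd_prod_of_mem _ ha)
        (Ideal.subset_span (Set.mem_image_of_mem _ has))
    · exact Ideal.mem_of_dvd _ (Finset.dvd_prod_of_mem _ hb)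
        (Ideal.subset_span (Set.mem_image_of_mem _ hbs))

theorem isSqFreeMonomialIdeal_span_prod_X_comp {τ : Type*} {f : τ → σ}
    (hf : Function.Injective f) (𝒮 : Set (Finset τ)) :
    IsSqFreeMonomialIdeal (Ideal.span ((fun s => ∏ i ∈ s, (X (f i) : MvPolynomial σ K)) '' 𝒮)) :=
  ⟨Finset.map ⟨f, hf⟩ '' 𝒮, by simp only [Set.image_image, Finset.prod_map]; rfl⟩

end SqFreeMonomialIdeal

theorem stmt7_general (K : Type) [Field K] (n m r : ℕ)
    (I : Ideal (MvPolynomial (Fin n ⊕ Fin m ⊕ Fin r) K))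
    (hI : ∃ 𝒮 : Set (Finset (Fin n ⊕ Fin r)), I = Ideal.span
      ((fun s : Finset (Fin n ⊕ Fin r) => ∏ i ∈ s,
        (X (Sum.elim Sum.inl (Sum.inr ∘ Sum.inr) i) :
          MvPolynomial (Fin n ⊕ Fin m ⊕ Fin r) K)) '' 𝒮))
    (J : Ideal (MvPolynomial (Fin n ⊕ Fin m ⊕ Fin r) K))
    (hJ : J = I ⊔ Ideal.span {p | ∃ (i : Fin n) (j : Fin m),
      p = X (Sum.inl i) * X (Sum.inr (Sum.inl j))}) :
    alexDual J = alexDual I ⊓ Ideal.span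
      {∏ i : Fin n, (X (Sum.inl i) : MvPolynomial (Fin n ⊕ Fin m ⊕ Fin r) K),
       ∏ j : Fin m, (X (Sum.inr (Sum.inl j)) : MvPolynomial (Fin n ⊕ Fin m ⊕ Fin r) K)} := by
  classical
  obtain ⟨𝒮, rfl⟩ := hI
  subst hJ
  have hemb : Function.Injective (Sum.elim Sum.inl (Sum.inr ∘ Sum.inr) :
      Fin n ⊕ Fin r → Fin n ⊕ Fin m ⊕ Fin r) :=
    Sum.inl_injective.sumElim (Sum.inr_injective.comp Sum.inr_injective) (by simp)
  let A := Finset.univ.map (Function.Embedding.inl : Fin n ↪ Fin n ⊕ Fin m ⊕ Fin r)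
  let B := Finset.univ.map (Function.Embedding.inl.trans Function.Embedding.inr :
    Fin m ↪ Fin n ⊕ Fin m ⊕ Fin r)
  have hAB : Disjoint A B := by simp [A, B, Finset.disjoint_left]
  have hedges : {p : MvPolynomial (Fin n ⊕ Fin m ⊕ Fin r) K | ∃ (i : Fin n) (j : Fin m),
      p = X (Sum.inl i) * X (Sum.inr (Sum.inl j))} = {p | ∃ a ∈ A, ∃ b ∈ B, p = X a * X b} := by
    ext p
    simp [A, B]
  rw [hedges, alexDual_sup (isSqFreeMonomialIdeal_span_prod_X_comp hemb 𝒮)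
    ⟨_, span_X_mul_X_eq_span_prod_X hAB⟩, alexDual_span_X_mul_X hAB]
  simp [A, B, Finset.prod_map]

/-- for a nonzero squarefree monomial ideal `I` in the variables
`x₁,…,xₙ,z₁,…,z_r` and `J = I + (xᵢyⱼ)`, one has `J^∨ = I^∨ ∩ (x₁⋯xₙ, y₁⋯yₘ)`
in `S = K[x, y, z]`. -/
theorem stmt7 (K : Type) [Field K] (n m r : ℕ)
    (I : Ideal (MvPolynomial (Fin n ⊕ Fin m ⊕ Fin r) K)) (hI0 : I ≠ ⊥)
    (hI : ∃ 𝒮 : Set (Finset (Fin n ⊕ Fin r)), I = Ideal.span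
      ((fun s : Finset (Fin n ⊕ Fin r) => ∏ i ∈ s,
        (X (Sum.elim Sum.inl (Sum.inr ∘ Sum.inr) i) :
          MvPolynomial (Fin n ⊕ Fin m ⊕ Fin r) K)) '' 𝒮))
    (J : Ideal (MvPolynomial (Fin n ⊕ Fin m ⊕ Fin r) K))
    (hJ : J = I ⊔ Ideal.span {p | ∃ (i : Fin n) (j : Fin m),
      p = X (Sum.inl i) * X (Sum.inr (Sum.inl j))}) :
    alexDual J = alexDual I ⊓ Ideal.span
      {∏ i : Fin n, (X (Sum.inl i) : MvPolynomial (Fin n ⊕ Fin m ⊕ Fin r) K),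
       ∏ j : Fin m, (X (Sum.inr (Sum.inl j)) : MvPolynomial (Fin n ⊕ Fin m ⊕ Fin r) K)} :=
  stmt7_general K n m r I hI J hJ
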